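/- Let f: C[x,y,z] → C[λ] correspond to the morphism A³ → P¹, (x,y,z) ↦ [(xz−y²)x² + 1 : (xz−y²)³]. Then the subring C[xz−y², x] of C[x,y,z] equals the kernel of the locally nilpotent C[x]-derivation ∂ = x∂_y + 2y∂_z of C[x,y,z], and f factors as the composition of the quotient morphism ρ: A³ → A² = Spec(C[u,v]), (x,y,z) ↦ (xz−y², x), with h: A² → P¹, (u,v) ↦ [uv² + 1 : u³]. -/

import Mathlib

/-!
In the coordinates `x, y, u = xz - y²` the derivation becomes `x ∂_y`, whose kernel is
`ℂ[x, u]`. The substitution `z ↦ xz - y²` is injective (over the fraction field it is inverted by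
`z ↦ (z + y²) / x`), and its image `ℂ[x, y, xz]` contains the kernel: comparing coefficients in
`∂p = 0` shows that every monomial `x^i y^j z^k` of a kernel element has `k ≤ i`.
Local nilpotency holds because the elements killed by some power of a derivation form a
subalgebra, which here contains `x`, `y` and `z`.
-/

open AlgebraicGeometry CategoryTheory CategoryTheory.Limits

universe u

noncomputable section

namespace Paper

/-- `Spec k` as a scheme. -/
def SpecK (k : Type u) [CommRing k] : Scheme.{u} := Spec (CommRingCat.of k)

/-- The affine line `𝔸¹_k`. -/
def A1 (k : Type u) [CommRing k] : Scheme.{u} := Spec (CommRingCat.of (Polynomial k))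

/-- The structure morphism of the affine line. -/
def A1str (k : Type u) [CommRing k] : A1 k ⟶ SpecK k :=
  Spec.map (CommRingCat.ofHom (algebraMap k (Polynomial k)))

/-- Base change of a `k`-scheme along a ring homomorphism `k →+* k'`. -/
def baseChange {k k' : Type u} [CommRing k] [CommRing k'] (φ : k →+* k')
    {X : Scheme.{u}} (p : X ⟶ SpecK k) : Scheme.{u} :=
  pullback p (Spec.map (CommRingCat.ofHom φ))

/-- The structure morphism of a base change. -/
def baseChangeStr {k k' : Type u} [CommRing k] [CommRing k'] (φ : k →+* k')
    {X : Scheme.{u}} (p : X ⟶ SpecK k) : baseChange φ p ⟶ SpecK k' :=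
  pullback.snd p (Spec.map (CommRingCat.ofHom φ))

/-- The scheme-theoretic fiber of `f : X ⟶ S` over a point `s ∈ S`. -/
def fiberOver {X S : Scheme.{u}} (f : X ⟶ S) (s : S) : Scheme.{u} :=
  pullback f (S.fromSpecResidueField s)

/-- The structure morphism of a fiber over the residue field. -/
def fiberOverStr {X S : Scheme.{u}} (f : X ⟶ S) (s : S) :
    fiberOver f s ⟶ Spec (S.residueField s) :=
  pullback.snd f (S.fromSpecResidueField s)

/-- A morphism of schemes is an `𝔸¹`-fibration if it is surjective and its generic
fiber is isomorphic to the affine line over the residue field of the generic point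
(the function field of the base). -/
def IsA1Fibration {X C : Scheme.{u}} (ρ : X ⟶ C) : Prop :=
  Function.Surjective ρ.base ∧
    ∃ hC : IrreducibleSpace C,
      Nonempty (fiberOver ρ (@genericPoint C _ _ hC) ≅
        A1 (C.residueField (@genericPoint C _ _ hC)))

/-- A scheme is normal if all its local rings are integrally closed domains. -/
def NormalScheme (X : Scheme.{u}) : Prop :=
  ∀ x : X, ∃ _ : IsDomain (X.presheaf.stalk x), IsIntegrallyClosed (X.presheaf.stalk x)

/-- Geometric connectedness of a `k`-scheme: the base change to an algebraic closure
of `k` is a connected space. -/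
def GeomConnected (k : Type u) [Field k] {X : Scheme.{u}} (p : X ⟶ SpecK k) : Prop :=
  ConnectedSpace (baseChange (algebraMap k (AlgebraicClosure k)) p)

/-- Geometric integrality. -/
def GeomIntegral (k : Type u) [Field k] {X : Scheme.{u}} (p : X ⟶ SpecK k) : Prop :=
  IsIntegral (baseChange (algebraMap k (AlgebraicClosure k)) p)

/-- Negativity of the logarithmic Kodaira dimension of a smooth variety over `k`,
expressed through the characterization of Keel–McKernan/Miyanishi–Sugie (which, in
characteristic zero and for smooth affine curves and surfaces, is equivalent to the
vanishing of all the spaces of log-pluricanonical forms on a smooth complete model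
with SNC boundary): the base change of `X` to an algebraic closure of `k` is
generically covered by images of nonconstant morphisms from the affine line. -/
def NegLogKodaira (k : Type u) [Field k] {X : Scheme.{u}} (p : X ⟶ SpecK k) : Prop :=
  Dense {x : baseChange (algebraMap k (AlgebraicClosure k)) p |
    ∃ f : A1 (AlgebraicClosure k) ⟶ baseChange (algebraMap k (AlgebraicClosure k)) p,
      f ≫ baseChangeStr (algebraMap k (AlgebraicClosure k)) p = A1str (AlgebraicClosure k) ∧
      ¬ (∃ x₀, ∀ a, f.base a = x₀) ∧ x ∈ Set.range f.base}

/-- The morphism induced on base changes by a morphism over `Spec k`. -/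
def baseChangeHom {k k' : Type u} [CommRing k] [CommRing k'] (φ : k →+* k')
    {X C : Scheme.{u}} (p : X ⟶ SpecK k) (q : C ⟶ SpecK k) (ρ : X ⟶ C) (h : ρ ≫ q = p) :
    baseChange φ p ⟶ baseChange φ q :=
  pullback.map p (Spec.map (CommRingCat.ofHom φ)) q (Spec.map (CommRingCat.ofHom φ))
    ρ (𝟙 _) (𝟙 _) (by rw [h, Category.comp_id]) (by exact (Category.comp_id _).trans (Category.id_comp _).symm)

/-- `X` is `𝔸¹`-ruled over `k`: it contains a dense open subset of the form
`Z × 𝔸¹` for a smooth curve `Z` over `k`. -/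
def IsA1Ruled (k : Type u) [Field k] {X : Scheme.{u}} (p : X ⟶ SpecK k) : Prop :=
  ∃ (Z : Scheme.{u}) (q : Z ⟶ SpecK k) (U : X.Opens), Nonempty U ∧
    Dense (U : Set X) ∧ IsSmoothOfRelativeDimension 1 q ∧
    Nonempty (U.toScheme ≅ pullback q (A1str k))

/-- Two schemes are birationally equivalent: they contain isomorphic dense open
subschemes. -/
def AreBirational (X Y : Scheme.{u}) : Prop :=
  ∃ (U : X.Opens) (V : Y.Opens), Nonempty U ∧ Nonempty V ∧
    Dense (U : Set X) ∧ Dense (V : Set Y) ∧ Nonempty (U.toScheme ≅ V.toScheme)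

/-- `X` is a rational variety of dimension `n` over `k`: it is birationally
equivalent to the affine space `𝔸ⁿ_k`. -/
def IsRationalVariety (k : Type u) [Field k] (n : ℕ) (X : Scheme.{u}) : Prop :=
  AreBirational X (Spec (CommRingCat.of (MvPolynomial (Fin n) k)))


open MvPolynomial in
/-- The locally nilpotent derivation `∂ = x ∂_y + 2y ∂_z` of `ℂ[x,y,z]`. -/
def D17 : Derivation ℂ (MvPolynomial (Fin 3) ℂ) (MvPolynomial (Fin 3) ℂ) :=
  MvPolynomial.mkDerivation ℂ ![0, X 0, 2 * X 1]

end Paper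

namespace Derivation

variable {R A : Type*} [CommSemiring R] [CommSemiring A] [Algebra R A] (D : Derivation R A A)

theorem pow_apply_mul_eq_zero {a b : A} {m n : ℕ} (ha : (D.toLinearMap ^ m) a = 0)
    (hb : (D.toLinearMap ^ n) b = 0) : (D.toLinearMap ^ (m + n)) (a * b) = 0 := by
  induction h : m + n generalizing a b m n with
  | zero =>
    obtain rfl : m = 0 := by omega
    simp_all
  | succ k ih =>
    rcases m with _ | m
    · simp_all
    rcases n with _ | n
    · simp_all
    have hDa : (D.toLinearMap ^ m) (D a) = 0 := by rwa [pow_succ, Module.End.mul_apply] at ha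
    have hDb : (D.toLinearMap ^ n) (D b) = 0 := by rwa [pow_succ, Module.End.mul_apply] at hb
    rw [pow_succ, Module.End.mul_apply, coeFn_coe, leibniz, map_add, smul_eq_mul, smul_eq_mul,
      ih ha hDb (by omega), ih hb hDa (by omega), add_zero]

def nilSubalgebra : Subalgebra R A where
  carrier := {a | ∃ n, (D.toLinearMap ^ n) a = 0}
  mul_mem' := fun ⟨m, ha⟩ ⟨n, hb⟩ => ⟨m + n, D.pow_apply_mul_eq_zero ha hb⟩
  add_mem' := fun {a b} ⟨m, ha⟩ ⟨n, hb⟩ => ⟨m + n, by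
    rw [map_add, Module.End.pow_map_zero_of_le (by omega) ha,
      Module.End.pow_map_zero_of_le (by omega) hb, add_zero]⟩
  algebraMap_mem' r := ⟨1, by simp⟩

theorem mem_nilSubalgebra_of_apply_mem {a : A} (h : D a ∈ D.nilSubalgebra) :
    a ∈ D.nilSubalgebra :=
  let ⟨n, hn⟩ := h
  ⟨n + 1, by rwa [pow_succ, Module.End.mul_apply]⟩

end Derivation

namespace MvPolynomial

theorem notMem_vars_of_pderiv_eq_zero {σ R : Type*} [CommSemiring R] [NoZeroDivisors R]
    [CharZero R] {i : σ} {p : MvPolynomial σ R} (h : pderiv i p = 0) : i ∉ p.vars := by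
  classical
  rw [mem_vars_iff_mem_support]
  rintro ⟨d, hd, hi⟩
  have hdi : d - Finsupp.single i 1 + Finsupp.single i 1 = d := tsub_add_cancel_of_le
    (Finsupp.single_le_iff.2 (Nat.one_le_iff_ne_zero.2 (Finsupp.mem_support_iff.1 hi)))
  have := coeff_pderiv (i := i) p (d - Finsupp.single i 1)
  rw [h, coeff_zero, hdi] at this
  exact mem_support_iff.1 hd
    ((mul_eq_zero.1 this.symm).resolve_right (Nat.cast_add_one_ne_zero _))

end MvPolynomial

namespace Paper

open MvPolynomial

section

variable (R : Type*) [CommRing R]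

def substZ : MvPolynomial (Fin 3) R →ₐ[R] MvPolynomial (Fin 3) R :=
  aeval ![X 0, X 1, X 0 * X 2 - X 1 ^ 2]

variable {R}

@[simp] theorem substZ_X_zero : substZ R (X 0) = X 0 := by simp [substZ]
@[simp] theorem substZ_X_one : substZ R (X 1) = X 1 := by simp [substZ]
@[simp] theorem substZ_X_two : substZ R (X 2) = X 0 * X 2 - X 1 ^ 2 := by simp [substZ]

theorem substZ_injective [IsDomain R] : Function.Injective (substZ R) := by
  let K := FractionRing (MvPolynomial (Fin 3) R)
  let ι := algebraMap (MvPolynomial (Fin 3) R) K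
  have hx : ι (X 0) ≠ 0 :=
    (map_ne_zero_iff ι (IsFractionRing.injective _ K)).2 (X_ne_zero 0)
  let θ : MvPolynomial (Fin 3) R →ₐ[R] K :=
    aeval ![ι (X 0), ι (X 1), (ι (X 2) + ι (X 1) ^ 2) / ι (X 0)]
  have hθ : θ.comp (substZ R) = IsScalarTower.toAlgHom R _ K := by
    refine algHom_ext fun i => ?_
    fin_cases i <;> simp [θ, ι]
    rw [mul_div_cancel₀ _ hx, add_sub_cancel_right]
  have : Function.Injective (θ.comp (substZ R)) := hθ ▸ IsFractionRing.injective _ K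
  exact Function.Injective.of_comp (f := θ) this

theorem mem_range_substZ {p : MvPolynomial (Fin 3) R} (hp : ∀ m ∈ p.support, m 2 ≤ m 0) :
    p ∈ (substZ R).range := by
  rw [p.as_sum]
  refine Subalgebra.sum_mem _ fun m hm => ?_
  have hx : X 0 ∈ (substZ R).range := ⟨X 0, by simp⟩
  have hy : X 1 ∈ (substZ R).range := ⟨X 1, by simp⟩
  have hxz : X 0 * X 2 ∈ (substZ R).range := ⟨X 2 + X 1 ^ 2, by simp⟩
  have hmon : monomial m (coeff m p) =
      C (coeff m p) * X 0 ^ (m 0 - m 2) * X 1 ^ m 1 * (X 0 * X 2) ^ m 2 := by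
    rw [monomial_eq, Finsupp.prod_fintype _ _ (by simp), Fin.prod_univ_three,
      ← pow_sub_mul_pow (X 0) (hp m hm)]
    ring
  rw [hmon]
  exact mul_mem (mul_mem (mul_mem (Subalgebra.algebraMap_mem _ _) (pow_mem hx _))
    (pow_mem hy _)) (pow_mem hxz _)

end

@[simp] theorem D17_X_zero : D17 (X 0) = 0 := by simp [D17, mkDerivation_X]
@[simp] theorem D17_X_one : D17 (X 1) = X 0 := by simp [D17, mkDerivation_X]
@[simp] theorem D17_X_two : D17 (X 2) = 2 * X 1 := by simp [D17, mkDerivation_X]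

theorem D17_apply (p : MvPolynomial (Fin 3) ℂ) :
    D17 p = X 0 * pderiv 1 p + C 2 * (X 1 * pderiv 2 p) := by
  have : D17 = (X 0 : MvPolynomial (Fin 3) ℂ) • pderiv 1 +
      (C 2 * X 1 : MvPolynomial (Fin 3) ℂ) • pderiv 2 := by
    refine derivation_ext fun i => ?_
    fin_cases i <;> simp [pderiv_X, map_ofNat]
  rw [this]
  simp only [Derivation.add_apply, Derivation.smul_apply, smul_eq_mul]
  ring

def expVec (i j k : ℕ) : Fin 3 →₀ ℕ := Finsupp.equivFunOnFinite.symm ![i, j, k]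

@[simp] theorem expVec_apply (i j k : ℕ) (a : Fin 3) : expVec i j k a = ![i, j, k] a := rfl

theorem eq_expVec (m : Fin 3 →₀ ℕ) : m = expVec (m 0) (m 1) (m 2) := by
  ext a; fin_cases a <;> rfl

theorem coeff_D17_expVec_zero (p : MvPolynomial (Fin 3) ℂ) (j k : ℕ) :
    coeff (expVec 0 (j + 1) k) (D17 p) = 2 * (k + 1) * coeff (expVec 0 j (k + 1)) p := by
  have h : expVec 0 (j + 1) k - Finsupp.single 1 1 + Finsupp.single 2 1 =
      expVec 0 j (k + 1) := by
    ext a; fin_cases a <;> simp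
  simp [D17_apply, coeff_X_mul', coeff_pderiv, h]
  ring

theorem coeff_D17_expVec_succ (p : MvPolynomial (Fin 3) ℂ) (i j k : ℕ) :
    coeff (expVec (i + 1) (j + 1) k) (D17 p) =
      (j + 2) * coeff (expVec i (j + 2) k) p +
        2 * (k + 1) * coeff (expVec (i + 1) j (k + 1)) p := by
  have h₀ : expVec (i + 1) (j + 1) k - Finsupp.single 0 1 + Finsupp.single 1 1 =
      expVec i (j + 2) k := by
    ext a; fin_cases a <;> simp
  have h₁ : expVec (i + 1) (j + 1) k - Finsupp.single 1 1 + Finsupp.single 2 1 =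
      expVec (i + 1) j (k + 1) := by
    ext a; fin_cases a <;> simp
  simp [D17_apply, coeff_X_mul', coeff_pderiv, h₀, h₁]
  ring

theorem D17_substZ (r : MvPolynomial (Fin 3) ℂ) :
    D17 (substZ ℂ r) = substZ ℂ (X 0 * pderiv 1 r) := by
  induction r using MvPolynomial.induction_on with
  | C a => simp [← algebraMap_eq]
  | add p q hp hq => simp only [map_add, mul_add, hp, hq]
  | mul_X p i hp =>
    rw [map_mul, Derivation.leibniz, hp, pderiv_mul, mul_add, map_add, map_mul, map_mul]
    fin_cases i <;> simp [pderiv_X] <;> ring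

theorem coeff_eq_zero_of_D17_eq_zero {p : MvPolynomial (Fin 3) ℂ} (hp : D17 p = 0) :
    ∀ i j k, i < k → coeff (expVec i j k) p = 0 := by
  intro i
  induction i with
  | zero =>
    rintro j (_ | k) hk
    · omega
    have h := coeff_D17_expVec_zero p j k
    rw [hp, coeff_zero] at h
    exact (mul_eq_zero.1 h.symm).resolve_left
      (mul_ne_zero two_ne_zero (Nat.cast_add_one_ne_zero k))
  | succ i ih =>
    rintro j (_ | k) hk
    · omega
    have h := coeff_D17_expVec_succ p i j k
    rw [hp, coeff_zero, ih (j + 2) k (by omega), mul_zero, zero_add] at h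
    exact (mul_eq_zero.1 h.symm).resolve_left
      (mul_ne_zero two_ne_zero (Nat.cast_add_one_ne_zero k))

theorem le_of_mem_support_of_D17_eq_zero {p : MvPolynomial (Fin 3) ℂ} (hp : D17 p = 0)
    {m : Fin 3 →₀ ℕ} (hm : m ∈ p.support) : m 2 ≤ m 0 := by
  by_contra! h
  rw [eq_expVec m] at hm
  exact mem_support_iff.1 hm (coeff_eq_zero_of_D17_eq_zero hp _ _ _ h)

theorem D17_eq_zero_of_mem_adjoin {p : MvPolynomial (Fin 3) ℂ}
    (hp : p ∈ Algebra.adjoin ℂ {X 0 * X 2 - X 1 ^ 2, X 0}) : D17 p = 0 := by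
  refine Derivation.eqOn_adjoin (D2 := 0) ?_ hp
  rintro _ (rfl | rfl)
  · simp [sub_eq_zero]
    ring
  · simp

theorem mem_adjoin_of_D17_eq_zero {p : MvPolynomial (Fin 3) ℂ} (hp : D17 p = 0) :
    p ∈ Algebra.adjoin ℂ {X 0 * X 2 - X 1 ^ 2, X 0} := by
  obtain ⟨r, rfl⟩ := (AlgHom.mem_range _).1 <|
    mem_range_substZ fun m hm => le_of_mem_support_of_D17_eq_zero hp hm
  have hr : pderiv 1 r = 0 := by
    have : X 0 * pderiv 1 r = 0 := substZ_injective (by rw [← D17_substZ, hp, map_zero])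
    exact (mul_eq_zero.1 this).resolve_left (X_ne_zero 0)
  have hvars : r ∈ supported ℂ {0, 2} := mem_supported.2 fun i hi => by
    fin_cases i
    · simp
    · exact absurd hi (notMem_vars_of_pderiv_eq_zero hr)
    · simp
  rw [supported_eq_adjoin_X] at hvars
  have himage : substZ ℂ '' (X '' {0, 2}) = {X 0 * X 2 - X 1 ^ 2, X 0} := by
    simp [Set.image_insert_eq, Set.pair_comm]
  rw [← himage, Algebra.adjoin_image]
  exact Subalgebra.mem_map.2 ⟨r, hvars, rfl⟩

theorem D17_nilSubalgebra_eq_top : D17.nilSubalgebra = ⊤ := by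
  have h0 : X 0 ∈ D17.nilSubalgebra := D17.mem_nilSubalgebra_of_apply_mem (by simp)
  have h1 : X 1 ∈ D17.nilSubalgebra := D17.mem_nilSubalgebra_of_apply_mem (by simpa using h0)
  have h2 : X 2 ∈ D17.nilSubalgebra :=
    D17.mem_nilSubalgebra_of_apply_mem (by simp [mul_mem (ofNat_mem _ 2) h1])
  rw [eq_top_iff, ← adjoin_range_X, Algebra.adjoin_le_iff]
  rintro _ ⟨i, rfl⟩
  fin_cases i <;> assumption

open MvPolynomial in
/-- For `∂ = x ∂_y + 2y ∂_z` on `ℂ[x,y,z]` one has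
`ker ∂ = ℂ[xz - y², x]`, `∂` is locally nilpotent, and the morphism
`𝔸³ → ℙ¹, (x,y,z) ↦ [(xz - y²)x² + 1 : (xz - y²)³]` factors as the quotient morphism
`ρ : 𝔸³ → 𝔸² = Spec ℂ[u,v]`, `(x,y,z) ↦ (xz - y², x)` followed by
`h : 𝔸² → ℙ¹`, `(u,v) ↦ [uv² + 1 : u³]` (the factorization being expressed by the
identities `ρ^*(uv² + 1) = (xz - y²)x² + 1` and `ρ^*(u³) = (xz - y²)³`). -/
theorem kernel_of_x_dy_plus_2y_dz_and_factorization :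
    (∀ p : MvPolynomial (Fin 3) ℂ,
      D17 p = 0 ↔ p ∈ Algebra.adjoin ℂ
        ({X 0 * X 2 - X 1 ^ 2, X 0} : Set (MvPolynomial (Fin 3) ℂ))) ∧
    (∀ p : MvPolynomial (Fin 3) ℂ, ∃ n : ℕ, (D17.toLinearMap ^ n) p = 0) ∧
    (aeval (![X 0 * X 2 - X 1 ^ 2, X 0] : Fin 2 → MvPolynomial (Fin 3) ℂ)
        ((X 0 * X 1 ^ 2 + 1 : MvPolynomial (Fin 2) ℂ)) =
      (X 0 * X 2 - X 1 ^ 2) * X 0 ^ 2 + 1) ∧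
    (aeval (![X 0 * X 2 - X 1 ^ 2, X 0] : Fin 2 → MvPolynomial (Fin 3) ℂ) ((X 0 ^ 3 : MvPolynomial (Fin 2) ℂ)) =
      (X 0 * X 2 - X 1 ^ 2) ^ 3) :=
  ⟨fun _ => ⟨mem_adjoin_of_D17_eq_zero, D17_eq_zero_of_mem_adjoin⟩,
    fun p => (D17_nilSubalgebra_eq_top ▸ Algebra.mem_top : p ∈ D17.nilSubalgebra),
    by simp, by simp⟩

end Paper
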